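/- arXiv:2501.19029 — 2 statements merged into one kernel-verified Lean document; each statement's English description precedes it below -/
import Mathlib

section
/- Let n ≥ 5, let M be a matching of the hypercube Q_n, and let u, v be vertices of Q_n of opposite parity. If at least one of the C-conditions holds for M, u, v, then there is no Hamilton path of Q_n between u and v extending M. -/
open SimpleGraph

/-- The hypercube graph `Q_n` on binary strings of length `n`:
two strings are adjacent iff they differ in exactly one coordinate. -/
def Qc (n : ℕ) : SimpleGraph (Fin n → Bool) where
  Adj u v := (Finset.univ.filter fun i => u i ≠ v i).card = 1
  symm := by
    constructor
    intro u v h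
    have hset : (Finset.univ.filter fun i => v i ≠ u i)
        = (Finset.univ.filter fun i => u i ≠ v i) :=
      Finset.filter_congr (fun i _ => by simp [ne_comm])
    rw [hset]; exact h
  loopless := by
    constructor
    intro u h
    simp at h

/-- The parity (weight mod 2) of a vertex of the hypercube. -/
def wt {n : ℕ} (u : Fin n → Bool) : ZMod 2 :=
  ((Finset.univ.filter fun i => u i = true).card : ZMod 2)

/-- The neighbor of `u` obtained by flipping coordinate `i`. -/
def flipCoord {n : ℕ} (u : Fin n → Bool) (i : Fin n) : Fin n → Bool :=
  Function.update u i (!u i)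

/-- `M` is a matching of the graph `G`: a set of pairwise non-incident edges of `G`. -/
def IsMatchingOn {V : Type*} (G : SimpleGraph V) (M : Set (Sym2 V)) : Prop :=
  M ⊆ G.edgeSet ∧ ∀ e ∈ M, ∀ f ∈ M, e ≠ f → ∀ v : V, v ∈ e → v ∉ f

/-- A vertex is covered by a set of edges if it is an endpoint of one of them. -/
def coveredBy {V : Type*} (M : Set (Sym2 V)) (v : V) : Prop :=
  ∃ e ∈ M, v ∈ e

/-- There is a Hamilton path of `G` between `u` and `v` whose edge set contains `M`. -/
def ExtendsHamPath {V : Type*} [DecidableEq V] (G : SimpleGraph V) (M : Set (Sym2 V)) (u v : V) : Prop :=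
  ∃ p : G.Walk u v, p.IsHamiltonian ∧ ∀ e ∈ M, e ∈ p.edges

/-- There is a Hamilton cycle of `G` whose edge set contains `M`. -/
def ExtendsHamCycle {V : Type*} [DecidableEq V] (G : SimpleGraph V) (M : Set (Sym2 V)) : Prop :=
  ∃ (a : V) (c : G.Walk a a), c.IsHamiltonianCycle ∧ ∀ e ∈ M, e ∈ c.edges

/-- The set of directions (coordinates where the endpoints differ) of an edge. -/
def edgeDirs {n : ℕ} (e : Sym2 (Fin n → Bool)) : Finset (Fin n) :=
  Sym2.lift ⟨fun u v => Finset.univ.filter fun i => u i ≠ v i, fun u v =>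
    Finset.filter_congr (fun i _ => by simp [ne_comm])⟩ e

/-- The edges of `M` lie in at most `d` distinct directions. -/
def SpansAtMost {n : ℕ} (M : Set (Sym2 (Fin n → Bool))) (d : ℕ) : Prop :=
  ∃ D : Finset (Fin n), D.card ≤ d ∧ ∀ e ∈ M, edgeDirs e ⊆ D

/-- The half-layer in direction `i` of parity `p`: all edges of `Q_n` in direction `i`
whose base (the endpoint with `i`-th coordinate `false`) has parity `p`. -/
def halfLayer (n : ℕ) (i : Fin n) (p : ZMod 2) : Set (Sym2 (Fin n → Bool)) :=
  {e | ∃ u : Fin n → Bool, u i = false ∧ wt u = p ∧ e = s(u, flipCoord u i)}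

/-- Condition C1: `M` contains a half-layer covering both `u` and `v`. -/
def CondC1 {n : ℕ} (M : Set (Sym2 (Fin n → Bool))) (u v : Fin n → Bool) : Prop :=
  ∃ (i : Fin n) (p : ZMod 2), halfLayer n i p ⊆ M ∧
    coveredBy (halfLayer n i p) u ∧ coveredBy (halfLayer n i p) v

/-- Condition C2: `v = u^i`, `M` contains a `u`-avoiding almost half-layer in direction `i`,
and there is `j ≠ i` with `u u^j ∈ M` and `v v^j ∈ M`. -/
def CondC2 {n : ℕ} (M : Set (Sym2 (Fin n → Bool))) (u v : Fin n → Bool) : Prop :=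
  ∃ i : Fin n, v = flipCoord u i ∧
    (∃ (p : ZMod 2) (e₀ : Sym2 (Fin n → Bool)), e₀ ∈ halfLayer n i p ∧ u ∈ e₀ ∧
      halfLayer n i p \ {e₀} ⊆ M) ∧
    ∃ j : Fin n, j ≠ i ∧ s(u, flipCoord u j) ∈ M ∧ s(v, flipCoord v j) ∈ M

/-- Condition C3: `uv ∈ M`. -/
def CondC3 {n : ℕ} (M : Set (Sym2 (Fin n → Bool))) (u v : Fin n → Bool) : Prop :=
  s(u, v) ∈ M

/-- None of the C-conditions holds for `M`, `u`, `v`. -/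
def NoneC {n : ℕ} (M : Set (Sym2 (Fin n → Bool))) (u v : Fin n → Bool) : Prop :=
  ¬ CondC1 M u v ∧ ¬ CondC2 M u v ∧ ¬ CondC3 M u v

/-- Conjecture A for dimension `d`: for every matching `M` of `Q_d` and vertices `u`, `v`
of opposite parity with `u` not covered by `M`, there is a Hamilton path between `u` and `v`
extending `M`. -/
def ConjA (d : ℕ) : Prop :=
  ∀ M : Set (Sym2 (Fin d → Bool)), IsMatchingOn (Qc d) M →
    ∀ u v : Fin d → Bool, wt u ≠ wt v → ¬ coveredBy M u →
      ExtendsHamPath (Qc d) M u v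

/-- Conjecture B for dimension `d`: for every matching `M` of `Q_d` and vertices `u`, `v`
of opposite parity, a Hamilton path between `u` and `v` extending `M` exists iff none of
the C-conditions holds. -/
def ConjB (d : ℕ) : Prop :=
  ∀ M : Set (Sym2 (Fin d → Bool)), IsMatchingOn (Qc d) M →
    ∀ u v : Fin d → Bool, wt u ≠ wt v →
      (ExtendsHamPath (Qc d) M u v ↔ NoneC M u v)

/-- There exist at least two distinct Hamilton paths of `G` between `u` and `v`
extending `M`. -/
def TwoHamPaths {V : Type*} [DecidableEq V] (G : SimpleGraph V) (M : Set (Sym2 V)) (u v : V) : Prop :=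
  ∃ p₁ p₂ : G.Walk u v, p₁.IsHamiltonian ∧ (∀ e ∈ M, e ∈ p₁.edges) ∧
    p₂.IsHamiltonian ∧ (∀ e ∈ M, e ∈ p₂.edges) ∧ p₁ ≠ p₂

/-- Conjecture C for dimension `d`: none of the C-conditions holds iff there exist two
distinct Hamilton paths between `u` and `v` extending `M`. -/
def ConjC (d : ℕ) : Prop :=
  ∀ M : Set (Sym2 (Fin d → Bool)), IsMatchingOn (Qc d) M →
    ∀ u v : Fin d → Bool, wt u ≠ wt v →
      (NoneC M u v ↔ TwoHamPaths (Qc d) M u v)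

/-- The copy of a set of edges of `Q_d` inside the `i`-th canonical copy of `Q_d`
in `P_m □ Q_d`. -/
def liftEdges {m d : ℕ} (i : Fin m) (M : Set (Sym2 (Fin d → Bool))) :
    Set (Sym2 (Fin m × (Fin d → Bool))) :=
  (Sym2.map fun x => (i, x)) '' M

/-- The global parity of a vertex of `P_m □ Q_d`. -/
def gwt {m d : ℕ} (v : Fin m × (Fin d → Bool)) : ZMod 2 :=
  (v.1.val : ZMod 2) + wt v.2

/-- The sequence of half-layers of `P_m □ Q_d` in direction `k` of global parity `p`:
all edges of the canonical copies lying in direction `k` whose base has global parity `p`. -/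
def seqHalfLayer (m d : ℕ) (k : Fin d) (p : ZMod 2) :
    Set (Sym2 (Fin m × (Fin d → Bool))) :=
  {e | ∃ (i : Fin m) (x : Fin d → Bool), x k = false ∧ gwt (i, x) = p ∧
    e = s((i, x), (i, flipCoord x k))}

/-- `M` is a maximal matching of `G`. -/
def IsMaximalMatchingOn {V : Type*} (G : SimpleGraph V) (M : Set (Sym2 V)) : Prop :=
  IsMatchingOn G M ∧ ∀ e : Sym2 V, IsMatchingOn G (insert e M) → e ∈ M

/-- The set `(M \ {uu^M, vv^M}) ∪ {u^M v^M}`, where the removed edges are those of `M`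
incident to `u` or `v`, and the edge `u^M v^M` is present exactly when both `u` and `v`
are covered by `M`. -/
def reducedM {n : ℕ} (M : Set (Sym2 (Fin n → Bool))) (u v : Fin n → Bool) :
    Set (Sym2 (Fin n → Bool)) :=
  {e | e ∈ M ∧ u ∉ e ∧ v ∉ e} ∪
    {f | ∃ a b : Fin n → Bool, s(u, a) ∈ M ∧ s(v, b) ∈ M ∧ f = s(a, b)}

/-- The complete bipartite graph `B(Q_n)` on the vertices of `Q_n`: two vertices are
adjacent iff they have opposite parity. -/
def Bgraph (n : ℕ) : SimpleGraph (Fin n → Bool) where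
  Adj u v := wt u ≠ wt v
  symm := ⟨fun _ _ h => h.symm⟩
  loopless := ⟨fun _ h => h rfl⟩


/-!
The edges of a Hamilton path from `u` to `v` form a spanning subgraph in which `u` and `v` have
degree one and every other vertex has degree two. Fix a direction `i` and split the subcube
`x i = 1` by parity into `B` (the tops of the half-layer edges) and `D`; the two classes have the
same size. A vertex of `D` other than an endpoint has a path neighbour inside the subcube, hence in
`B`, while a vertex of `B` whose half-layer edge lies on the path has at most one path neighbour in
`D`. Counting the path edges between `B` and `D` therefore gives `|D| < |B|` as soon as some vertex
of `B` has no path neighbour in `D` (in case C1, the endpoint `v`) or some vertex of `D` has two in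
`B` (in case C2, the vertex `v^j`, unless the path is `u, u^j, v^j, v`). In case C3, and in that
exceptional case of C2, the path is too short to visit all `2^n` vertices.
-/

open Finset

namespace SimpleGraph.Walk

variable {V : Type*} {G : SimpleGraph V} {u v w a b : V} {p : G.Walk u v}

theorem IsPath.ncard_neighborSet_toSubgraph_eq_two (hp : p.IsPath) (hw : w ∈ p.support)
    (hwu : w ≠ u) (hwv : w ≠ v) : (p.toSubgraph.neighborSet w).ncard = 2 := by
  obtain ⟨k, rfl, hk⟩ := mem_support_iff_exists_getVert.mp hw
  refine hp.ncard_neighborSet_toSubgraph_internal_eq_two (fun hk0 => ?_)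
    (hk.lt_of_ne fun hkl => ?_)
  · exact hwu (by rw [hk0, getVert_zero])
  · exact hwv (by rw [hkl, getVert_length])

theorem IsPath.eq_of_toSubgraph_adj_end (hp : p.IsPath) (ha : p.toSubgraph.Adj v a)
    (hb : p.toSubgraph.Adj v b) : a = b := by
  rw [← toSubgraph_reverse] at ha hb
  exact (hp.reverse.snd_of_toSubgraph_adj ha).symm.trans (hp.reverse.snd_of_toSubgraph_adj hb)

theorem IsPath.card_filter_toSubgraph_adj_end_le_one [DecidablePred (p.toSubgraph.Adj · v)]
    (hp : p.IsPath) (s : Finset V) : #{x ∈ s | p.toSubgraph.Adj x v} ≤ 1 :=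
  card_le_one.mpr fun _ ha _ hb =>
    hp.eq_of_toSubgraph_adj_end (mem_filter.mp ha).2.symm (mem_filter.mp hb).2.symm

theorem IsPath.card_filter_toSubgraph_adj_le_one [DecidablePred (p.toSubgraph.Adj · w)]
    (hp : p.IsPath) (hw : w ∈ p.support) (hwu : w ≠ u) (hwv : w ≠ v) {z : V}
    (hz : p.toSubgraph.Adj w z) {s : Finset V} (hzs : z ∉ s) :
    #{x ∈ s | p.toSubgraph.Adj x w} ≤ 1 := by
  have hfin := p.finite_neighborSet_toSubgraph (w := w)
  have hsub : (↑{x ∈ s | p.toSubgraph.Adj x w} : Set V) ⊆ p.toSubgraph.neighborSet w \ {z} :=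
    fun x hx => ⟨(mem_filter.mp hx).2.symm, fun hxz => hzs (hxz ▸ (mem_filter.mp hx).1)⟩
  calc #{x ∈ s | p.toSubgraph.Adj x w}
      = (↑{x ∈ s | p.toSubgraph.Adj x w} : Set V).ncard := (Set.ncard_coe_finset _).symm
    _ ≤ (p.toSubgraph.neighborSet w \ {z}).ncard := Set.ncard_le_ncard hsub hfin.sdiff
    _ = 1 := by
      rw [Set.ncard_sdiff_singleton_of_mem (show z ∈ p.toSubgraph.neighborSet w from hz),
        hp.ncard_neighborSet_toSubgraph_eq_two hw hwu hwv]

theorem IsPath.exists_tail_of_mem_edges (hp : p.IsPath) (h : s(u, a) ∈ p.edges) :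
    ∃ q : G.Walk a v, q.IsPath ∧ p.length = q.length + 1 ∧
      ∀ e ∈ p.edges, e ≠ s(u, a) → e ∈ q.edges := by
  cases p with
  | nil => simp at h
  | cons hux q =>
    rw [cons_isPath_iff] at hp
    rw [edges_cons, List.mem_cons] at h
    rcases h with h | h
    · obtain rfl := Sym2.congr_right.mp h
      refine ⟨q, hp.1, rfl, fun e he hne => ?_⟩
      rw [edges_cons, List.mem_cons] at he
      exact he.resolve_left hne
    · exact absurd (q.fst_mem_support_of_mem_edges h) hp.2

theorem IsPath.length_eq_three_of_mem_edges (hp : p.IsPath) (hbu : b ≠ u) (hav : a ≠ v)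
    (hua : s(u, a) ∈ p.edges) (hab : s(a, b) ∈ p.edges) (hbv : s(b, v) ∈ p.edges) :
    p.length = 3 := by
  have hne : a ≠ b := (p.adj_of_mem_edges hab).ne
  obtain ⟨q, hq, hlen, hqe⟩ := hp.exists_tail_of_mem_edges hua
  obtain ⟨r, hr, hlen', hre⟩ :=
    hq.exists_tail_of_mem_edges (hqe _ hab (by grind [Sym2.eq_iff]))
  have hbv' : s(b, v) ∈ r.edges :=
    hre _ (hqe _ hbv (by grind [Sym2.eq_iff])) (by grind [Sym2.eq_iff])
  rw [hlen, hlen', hr.length_eq_one_of_mem_edges hbv']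

end SimpleGraph.Walk

theorem ExtendsHamPath.symm {V : Type*} [DecidableEq V] {G : SimpleGraph V}
    {M : Set (Sym2 V)} {u v : V} (h : ExtendsHamPath G M u v) : ExtendsHamPath G M v u := by
  obtain ⟨p, hp, hM⟩ := h
  refine ⟨p.reverse, fun w => ?_, fun e he => ?_⟩
  · rw [Walk.support_reverse, List.count_reverse]
    exact hp w
  · rw [Walk.edges_reverse, List.mem_reverse]
    exact hM e he

theorem card_lt_card_of_bipartite {α β : Type*} {s : Finset α} {t : Finset β}
    (r : α → β → Prop) [∀ a b, Decidable (r a b)]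
    (hs : ∀ a ∈ s, 1 ≤ #(t.bipartiteAbove r a)) (ht : ∀ b ∈ t, #(s.bipartiteBelow r b) ≤ 1)
    (hlt : (∃ a ∈ s, 1 < #(t.bipartiteAbove r a)) ∨ ∃ b ∈ t, #(s.bipartiteBelow r b) < 1) :
    #s < #t := by
  have hcount := sum_card_bipartiteAbove_eq_sum_card_bipartiteBelow r (s := s) (t := t)
  rcases hlt with ⟨a, ha, hlt⟩ | ⟨b, hb, hlt⟩
  · calc #s = ∑ _a ∈ s, 1 := by simp
      _ < ∑ a ∈ s, #(t.bipartiteAbove r a) := sum_lt_sum hs ⟨a, ha, hlt⟩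
      _ = ∑ b ∈ t, #(s.bipartiteBelow r b) := hcount
      _ ≤ ∑ _b ∈ t, 1 := sum_le_sum ht
      _ = #t := by simp
  · calc #s = ∑ _a ∈ s, 1 := by simp
      _ ≤ ∑ a ∈ s, #(t.bipartiteAbove r a) := sum_le_sum hs
      _ = ∑ b ∈ t, #(s.bipartiteBelow r b) := hcount
      _ < ∑ _b ∈ t, 1 := sum_lt_sum ht ⟨b, hb, hlt⟩
      _ = #t := by simp

section Hypercube

variable {n : ℕ}

@[simp]
theorem flipCoord_apply_self (x : Fin n → Bool) (i : Fin n) : flipCoord x i i = !x i := by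
  simp [flipCoord]

theorem flipCoord_apply_of_ne (x : Fin n → Bool) {i j : Fin n} (h : j ≠ i) :
    flipCoord x i j = x j :=
  Function.update_of_ne h _ _

@[simp]
theorem flipCoord_flipCoord (x : Fin n → Bool) (i : Fin n) :
    flipCoord (flipCoord x i) i = x := by
  funext k
  by_cases hk : k = i <;> simp [flipCoord, Function.update_apply, hk]

theorem flipCoord_comm (x : Fin n → Bool) (i j : Fin n) :
    flipCoord (flipCoord x i) j = flipCoord (flipCoord x j) i := by
  funext k
  rcases eq_or_ne i j with rfl | hij
  · rfl
  by_cases hki : k = i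
  · subst hki
    simp [flipCoord_apply_of_ne _ hij]
  by_cases hkj : k = j
  · subst hkj
    simp [flipCoord_apply_of_ne _ hij.symm]
  · simp [flipCoord_apply_of_ne _ hki, flipCoord_apply_of_ne _ hkj]

theorem flipCoord_ne (x : Fin n → Bool) (i : Fin n) : flipCoord x i ≠ x := fun h => by
  simpa using congrFun h i

theorem wt_flipCoord (x : Fin n → Bool) (i : Fin n) : wt (flipCoord x i) = wt x + 1 := by
  have hterm : ∀ k, (if flipCoord x i k = true then (1 : ZMod 2) else 0)
      = (if x k = true then 1 else 0) + if i = k then 1 else 0 := by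
    intro k
    by_cases hk : k = i
    · subst hk
      rw [flipCoord_apply_self, if_pos rfl]
      cases x k <;> decide
    · simp [flipCoord_apply_of_ne x hk, Ne.symm hk]
  simp only [wt, ← sum_boole]
  rw [sum_congr rfl fun k _ => hterm k, sum_add_distrib, sum_ite_eq]
  simp

theorem qc_adj_iff {x y : Fin n → Bool} : (Qc n).Adj x y ↔ ∃ j, y = flipCoord x j := by
  change #{k | x k ≠ y k} = 1 ↔ _
  rw [card_eq_one]
  refine exists_congr fun j => ⟨fun h => funext fun k => ?_, ?_⟩
  · have hk := Finset.ext_iff.mp h k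
    by_cases hkj : k = j
    · subst hkj
      simp only [ne_eq, mem_filter, mem_univ, true_and, mem_singleton, iff_true] at hk
      rw [flipCoord_apply_self, Bool.eq_not_iff]
      exact Ne.symm hk
    · simp only [ne_eq, mem_filter, mem_univ, true_and, mem_singleton, hkj, iff_false,
        not_not] at hk
      rw [flipCoord_apply_of_ne x hkj, hk]
  · rintro rfl
    ext k
    by_cases hkj : k = j <;> simp [flipCoord_apply_of_ne, hkj]

theorem wt_eq_add_one_of_adj {x y : Fin n → Bool} (h : (Qc n).Adj x y) : wt y = wt x + 1 := by
  obtain ⟨j, rfl⟩ := qc_adj_iff.mp h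
  exact wt_flipCoord x j

theorem apply_eq_of_adj_of_ne_flipCoord {x y : Fin n → Bool} (h : (Qc n).Adj x y) {i : Fin n}
    (hy : y ≠ flipCoord x i) : y i = x i := by
  obtain ⟨j, rfl⟩ := qc_adj_iff.mp h
  exact flipCoord_apply_of_ne x fun hij => hy (by rw [hij])

theorem mk_flipCoord_mem_halfLayer_iff {i : Fin n} {q : ZMod 2} {x : Fin n → Bool} :
    s(x, flipCoord x i) ∈ halfLayer n i q ↔
      (x i = false ∧ wt x = q) ∨ (x i = true ∧ wt x = q + 1) := by
  constructor
  · rintro ⟨w, hwi, hww, he⟩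
    rcases Sym2.eq_iff.mp he with ⟨rfl, -⟩ | ⟨rfl, -⟩
    · exact Or.inl ⟨hwi, hww⟩
    · exact Or.inr ⟨by simp [hwi], by rw [wt_flipCoord, hww]⟩
  · rintro (⟨hxi, hxw⟩ | ⟨hxi, hxw⟩)
    · exact ⟨x, hxi, hxw, rfl⟩
    · refine ⟨flipCoord x i, by simp [hxi], ?_, by rw [flipCoord_flipCoord, Sym2.eq_swap]⟩
      rw [wt_flipCoord, hxw, add_assoc, CharTwo.add_self_eq_zero, add_zero]

theorem eq_mk_flipCoord_of_mem_halfLayer {i : Fin n} {q : ZMod 2} {e : Sym2 (Fin n → Bool)}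
    {x : Fin n → Bool} (he : e ∈ halfLayer n i q) (hx : x ∈ e) : e = s(x, flipCoord x i) := by
  obtain ⟨w, -, -, rfl⟩ := he
  rcases Sym2.mem_iff.mp hx with rfl | rfl
  · rfl
  · rw [flipCoord_flipCoord, Sym2.eq_swap]

end Hypercube

def upperHalf {n : ℕ} (i : Fin n) (q : ZMod 2) : Finset (Fin n → Bool) :=
  {x | x i = true ∧ wt x = q}

section HamiltonPath

variable {n : ℕ} {i : Fin n} {q : ZMod 2}

@[simp]
theorem mem_upperHalf {x : Fin n → Bool} : x ∈ upperHalf i q ↔ x i = true ∧ wt x = q := by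
  simp [upperHalf]

theorem card_upperHalf_add_one (hn : 2 ≤ n) (i : Fin n) (q : ZMod 2) :
    #(upperHalf i (q + 1)) = #(upperHalf i q) := by
  have : Nontrivial (Fin n) := Fin.nontrivial_iff_two_le.mpr hn
  obtain ⟨j, hji⟩ := exists_ne i
  refine card_nbij' (flipCoord · j) (flipCoord · j) (fun x hx => ?_) (fun x hx => ?_)
    (fun x _ => flipCoord_flipCoord x j) (fun x _ => flipCoord_flipCoord x j)
  · rw [mem_coe, mem_upperHalf] at hx ⊢
    exact ⟨(flipCoord_apply_of_ne x hji.symm).trans hx.1,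
      by rw [wt_flipCoord, hx.2, CharTwo.add_cancel_right]⟩
  · rw [mem_coe, mem_upperHalf] at hx ⊢
    exact ⟨(flipCoord_apply_of_ne x hji.symm).trans hx.1, by rw [wt_flipCoord, hx.2]⟩

theorem mem_upperHalf_add_one_of_adj {d b : Fin n → Bool} (h : (Qc n).Adj d b)
    (hb : b ≠ flipCoord d i) (hd : d ∈ upperHalf i q) : b ∈ upperHalf i (q + 1) := by
  rw [mem_upperHalf] at hd ⊢
  rw [apply_eq_of_adj_of_ne_flipCoord h hb, wt_eq_add_one_of_adj h, hd.2]
  exact ⟨hd.1, rfl⟩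

variable {u v : Fin n → Bool}

namespace SimpleGraph.Walk.IsHamiltonian

variable {p : (Qc n).Walk u v}

theorem length_eq_two_pow (hp : p.IsHamiltonian) : p.length = 2 ^ n - 1 := by
  simpa using hp.length_eq

theorem exists_toSubgraph_adj_mem_upperHalf (hp : p.IsHamiltonian) {d : Fin n → Bool}
    (hd : d ∈ upperHalf i q) (hdu : d ≠ u) (hdv : d ≠ v) :
    ∃ b ∈ upperHalf i (q + 1), p.toSubgraph.Adj d b := by
  have htwo := hp.isPath.ncard_neighborSet_toSubgraph_eq_two (hp.mem_support d) hdu hdv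
  obtain ⟨b, hb, hbi⟩ := Set.exists_ne_of_one_lt_ncard (htwo ▸ one_lt_two) (flipCoord d i)
  exact ⟨b, mem_upperHalf_add_one_of_adj (p.toSubgraph.adj_sub hb) hbi hd, hb⟩

theorem false_of_upperHalf (hn : 2 ≤ n) (hp : p.IsHamiltonian) (hui : u i = false)
    (hv : v ∈ upperHalf i (q + 1))
    (hH : ∀ b ∈ upperHalf i (q + 1), b ≠ v → p.toSubgraph.Adj b (flipCoord b i))
    (hlt : (∃ d ∈ upperHalf i q, ∃ b₁ ∈ upperHalf i (q + 1), ∃ b₂ ∈ upperHalf i (q + 1),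
        b₁ ≠ b₂ ∧ p.toSubgraph.Adj d b₁ ∧ p.toSubgraph.Adj d b₂) ∨
      ∀ d ∈ upperHalf i q, ¬ p.toSubgraph.Adj d v) : False := by
  classical
  have hneu : ∀ x, x i = true → x ≠ u := fun x hx hxu => by simp [hxu, hui] at hx
  have hs : ∀ d ∈ upperHalf i q,
      1 ≤ #((upperHalf i (q + 1)).bipartiteAbove p.toSubgraph.Adj d) := by
    intro d hd
    have hdv : d ≠ v := fun h => by simp [h, (mem_upperHalf.mp hv).2] at hd
    obtain ⟨b, hb, hdb⟩ :=
      hp.exists_toSubgraph_adj_mem_upperHalf hd (hneu d (mem_upperHalf.mp hd).1) hdv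
    exact one_le_card.mpr ⟨b, (mem_bipartiteAbove _).mpr ⟨hb, hdb⟩⟩
  have ht : ∀ b ∈ upperHalf i (q + 1),
      #((upperHalf i q).bipartiteBelow p.toSubgraph.Adj b) ≤ 1 := by
    intro b hb
    by_cases hbv : b = v
    · subst hbv
      exact hp.isPath.card_filter_toSubgraph_adj_end_le_one _
    · exact hp.isPath.card_filter_toSubgraph_adj_le_one (hp.mem_support b)
        (hneu b (mem_upperHalf.mp hb).1) hbv (hH b hb hbv) (by simp [(mem_upperHalf.mp hb).1])
  have hstrict : (∃ d ∈ upperHalf i q,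
        1 < #((upperHalf i (q + 1)).bipartiteAbove p.toSubgraph.Adj d)) ∨
      ∃ b ∈ upperHalf i (q + 1), #((upperHalf i q).bipartiteBelow p.toSubgraph.Adj b) < 1 := by
    rcases hlt with ⟨d, hd, b₁, hb₁, b₂, hb₂, hne, h₁, h₂⟩ | hv0
    · exact Or.inl ⟨d, hd, one_lt_card.mpr ⟨b₁, (mem_bipartiteAbove _).mpr ⟨hb₁, h₁⟩,
        b₂, (mem_bipartiteAbove _).mpr ⟨hb₂, h₂⟩, hne⟩⟩
    · refine Or.inr ⟨v, hv, ?_⟩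
      simp only [Nat.lt_one_iff, card_eq_zero, bipartiteBelow, filter_eq_empty_iff]
      exact hv0
  have hcard := card_lt_card_of_bipartite p.toSubgraph.Adj hs ht hstrict
  have heq := card_upperHalf_add_one hn i q
  omega

end SimpleGraph.Walk.IsHamiltonian

variable {M : Set (Sym2 (Fin n → Bool))}

theorem not_extendsHamPath_of_halfLayer_subset (hn : 2 ≤ n) (hsub : halfLayer n i q ⊆ M)
    (hui : u i = false) (hvi : v i = true) (hvw : wt v = q + 1) :
    ¬ ExtendsHamPath (Qc n) M u v := by
  rintro ⟨p, hp, hM⟩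
  have hH : ∀ b ∈ upperHalf i (q + 1), p.toSubgraph.Adj b (flipCoord b i) := fun b hb =>
    Walk.adj_toSubgraph_iff_mem_edges.mpr
      (hM _ (hsub (mk_flipCoord_mem_halfLayer_iff.mpr (Or.inr (mem_upperHalf.mp hb)))))
  have hv : v ∈ upperHalf i (q + 1) := mem_upperHalf.mpr ⟨hvi, hvw⟩
  refine hp.false_of_upperHalf hn hui hv (fun b hb _ => hH b hb) (Or.inr fun d hd hdv => ?_)
  have hdvi : d = flipCoord v i := hp.isPath.eq_of_toSubgraph_adj_end hdv.symm (hH v hv)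
  simp [hdvi, hvi] at hd

theorem not_extendsHamPath_of_almostHalfLayer_subset (hn : 3 ≤ n) {j : Fin n} (hji : j ≠ i)
    (hui : u i = false) (huw : wt u = q) (hvu : v = flipCoord u i)
    (hsub : halfLayer n i q \ {s(u, v)} ⊆ M) (huj : s(u, flipCoord u j) ∈ M)
    (hvj : s(v, flipCoord v j) ∈ M) : ¬ ExtendsHamPath (Qc n) M u v := by
  rintro ⟨p, hp, hM⟩
  set vj := flipCoord v j
  have hvi : v i = true := by simp [hvu, hui]
  have hvB : v ∈ upperHalf i (q + 1) := mem_upperHalf.mpr ⟨hvi, by rw [hvu, wt_flipCoord, huw]⟩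
  have hvji : vj i = true := (flipCoord_apply_of_ne v hji.symm).trans hvi
  have hvju : vj ≠ u := fun h => by simp [h, hui] at hvji
  have hvjD : vj ∈ upperHalf i q := mem_upperHalf.mpr
    ⟨hvji, by rw [wt_flipCoord, (mem_upperHalf.mp hvB).2, CharTwo.add_cancel_right]⟩
  have hvvj : p.toSubgraph.Adj v vj := Walk.adj_toSubgraph_iff_mem_edges.mpr (hM _ hvj)
  obtain ⟨w, hw, hwv⟩ := Set.exists_ne_of_one_lt_ncard
    (hp.isPath.ncard_neighborSet_toSubgraph_eq_two (hp.mem_support vj) hvju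
      (flipCoord_ne v j) ▸ one_lt_two) v
  by_cases hwi : w = flipCoord vj i
  -- then the path is `u, u^j, v^j, v`
  · have hwuj : w = flipCoord u j := by rw [hwi, flipCoord_comm, hvu, flipCoord_flipCoord]
    have hujv : flipCoord u j ≠ v := fun h => by
      simpa [flipCoord_apply_of_ne _ hji.symm, hui, hvi] using congrFun h i
    have hlen := hp.isPath.length_eq_three_of_mem_edges hvju hujv (hM _ huj)
      (Walk.adj_toSubgraph_iff_mem_edges.mp (hwuj ▸ hw).symm)
      (Walk.adj_toSubgraph_iff_mem_edges.mp hvvj.symm)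
    have := Nat.pow_le_pow_right two_pos hn
    rw [hp.length_eq_two_pow] at hlen
    omega
  refine hp.false_of_upperHalf (by omega) hui hvB (fun b hb hbv => ?_)
    (Or.inl ⟨vj, hvjD, v, hvB, w, mem_upperHalf_add_one_of_adj (p.toSubgraph.adj_sub hw) hwi hvjD,
      hwv.symm, hvvj.symm, hw⟩)
  refine Walk.adj_toSubgraph_iff_mem_edges.mpr (hM _ (hsub ⟨mk_flipCoord_mem_halfLayer_iff.mpr
    (Or.inr (mem_upperHalf.mp hb)), fun h => ?_⟩))
  rcases Sym2.eq_iff.mp h with ⟨rfl, -⟩ | ⟨rfl, -⟩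
  · simp [hui] at hb
  · exact hbv rfl

theorem not_extendsHamPath_of_mem (hn : 2 ≤ n) (h : s(u, v) ∈ M) :
    ¬ ExtendsHamPath (Qc n) M u v := by
  rintro ⟨p, hp, hM⟩
  have hlen := hp.isPath.length_eq_one_of_mem_edges (hM _ h)
  have := Nat.pow_le_pow_right two_pos hn
  rw [hp.length_eq_two_pow] at hlen
  omega

end HamiltonPath

theorem stmt4_general (n : ℕ) (hn : 5 ≤ n) (M : Set (Sym2 (Fin n → Bool)))
    (u v : Fin n → Bool) (hpar : wt u ≠ wt v)
    (hc : CondC1 M u v ∨ CondC2 M u v ∨ CondC3 M u v) :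
    ¬ ExtendsHamPath (Qc n) M u v := by
  rcases hc with ⟨i, q, hsub, ⟨e, he, hue⟩, ⟨e', he', hve⟩⟩ |
    ⟨i, hvu, ⟨q, e₀, he₀, hue₀, hsub⟩, j, hji, huj, hvj⟩ | huv
  · have hu := mk_flipCoord_mem_halfLayer_iff.mp (eq_mk_flipCoord_of_mem_halfLayer he hue ▸ he)
    have hv := mk_flipCoord_mem_halfLayer_iff.mp (eq_mk_flipCoord_of_mem_halfLayer he' hve ▸ he')
    rcases hu with ⟨hui, huw⟩ | ⟨hui, huw⟩ <;> rcases hv with ⟨hvi, hvw⟩ | ⟨hvi, hvw⟩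
    · exact absurd (huw.trans hvw.symm) hpar
    · exact not_extendsHamPath_of_halfLayer_subset (by omega) hsub hui hvi hvw
    · exact fun h => not_extendsHamPath_of_halfLayer_subset (by omega) hsub hvi hui huw h.symm
    · exact absurd (huw.trans hvw.symm) hpar
  · obtain rfl := eq_mk_flipCoord_of_mem_halfLayer he₀ hue₀
    rw [← hvu] at hsub
    rcases mk_flipCoord_mem_halfLayer_iff.mp he₀ with ⟨hui, huw⟩ | ⟨hui, huw⟩
    · exact not_extendsHamPath_of_almostHalfLayer_subset (by omega) hji hui huw hvu hsub huj hvj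
    · have huv : u = flipCoord v i := by rw [hvu, flipCoord_flipCoord]
      exact fun h => not_extendsHamPath_of_almostHalfLayer_subset (by omega) hji
        (by simp [hvu, hui]) (by rw [hvu, wt_flipCoord, huw, CharTwo.add_cancel_right]) huv
        (by rwa [Sym2.eq_swap]) hvj huj h.symm
  · exact not_extendsHamPath_of_mem (by omega) huv

/-- For `n ≥ 5`, a matching `M` of `Q_n` and vertices `u, v` of opposite parity,
if one of the C-conditions holds then no Hamilton path between `u` and `v` extends `M`. -/
theorem stmt4 (n : ℕ) (hn : 5 ≤ n) (M : Set (Sym2 (Fin n → Bool)))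
    (hM : IsMatchingOn (Qc n) M) (u v : Fin n → Bool) (hpar : wt u ≠ wt v)
    (hc : CondC1 M u v ∨ CondC2 M u v ∨ CondC3 M u v) :
    ¬ ExtendsHamPath (Qc n) M u v :=
  stmt4_general n hn M u v hpar hc
end

section
/- Let n ≥ 2. If Conjecture A holds for dimension n, then every matching of the hypercube Q_n can be extended to a Hamilton cycle of Q_n. -/
open SimpleGraph

/-! Remove one edge `uv` of `M` (any edge of `Q_n` if `M` is empty). Conjecture A gives a
Hamilton path from `u` to `v` through the remaining edges, and since `Q_n` has at least four
vertices this path has length at least `3`, so the edge `vu` closes it to a Hamilton cycle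
containing all of `M`. -/

namespace SimpleGraph.Walk

variable {V : Type*} [Fintype V] [DecidableEq V] {G : SimpleGraph V} {u v : V}

lemma IsHamiltonian.isHamiltonianCycle_cons {p : G.Walk u v} (hp : p.IsHamiltonian)
    (h : G.Adj v u) (hV : 3 ≤ Fintype.card V) : (cons h p).IsHamiltonianCycle where
  toIsCycle := by
    refine (cons_isCycle_iff p h).mpr ⟨hp.isPath, fun hvu => ?_⟩
    have := hp.isPath.length_eq_one_of_mem_edges (Sym2.eq_swap ▸ hvu)
    have := hp.length_eq
    omega
  isHamiltonian_tail := by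
    rw [tail_cons]
    exact fun w => by simpa using hp w

end SimpleGraph.Walk

lemma IsMatchingOn.mono {V : Type*} {G : SimpleGraph V} {M M' : Set (Sym2 V)}
    (hM : IsMatchingOn G M) (h : M' ⊆ M) : IsMatchingOn G M' :=
  ⟨h.trans hM.1, fun e he f hf => hM.2 e (h he) f (h hf)⟩

lemma IsMatchingOn.not_coveredBy_diff {V : Type*} {G : SimpleGraph V} {M : Set (Sym2 V)}
    (hM : IsMatchingOn G M) {e : Sym2 V} (he : e ∈ M) {v : V} (hv : v ∈ e) :
    ¬ coveredBy (M \ {e}) v := by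
  rintro ⟨f, ⟨hf, hfe⟩, hvf⟩
  exact hM.2 e he f hf (Ne.symm hfe) v hv hvf

lemma wt_add_wt {n : ℕ} (u v : Fin n → Bool) :
    wt u + wt v = ((Finset.univ.filter fun i => u i ≠ v i).card : ZMod 2) := by
  simp only [wt, Finset.card_filter, Nat.cast_sum, ← Finset.sum_add_distrib]
  refine Finset.sum_congr rfl fun i _ => ?_
  cases u i <;> cases v i <;> decide

lemma wt_ne_of_adj {n : ℕ} {u v : Fin n → Bool} (h : (Qc n).Adj u v) : wt u ≠ wt v := by
  intro huv
  have hsum := wt_add_wt u v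
  rw [huv, CharTwo.add_self_eq_zero, show (Finset.univ.filter fun i => u i ≠ v i).card = 1 from h]
    at hsum
  exact zero_ne_one hsum

lemma qc_adj_flipCoord {n : ℕ} (u : Fin n → Bool) (i : Fin n) : (Qc n).Adj u (flipCoord u i) := by
  show (Finset.univ.filter fun j => u j ≠ flipCoord u i j).card = 1
  rw [Finset.card_eq_one]
  refine ⟨i, Finset.ext fun j => ?_⟩
  rw [Finset.mem_filter, Finset.mem_singleton]
  by_cases hji : j = i
  · subst hji; simp [flipCoord]
  · simp [flipCoord, hji]

lemma extendsHamCycle_of_adj {n : ℕ} {u v : Fin n → Bool} (hn : 2 ≤ n) (hA : ConjA n)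
    {M : Set (Sym2 (Fin n → Bool))} (hM : IsMatchingOn (Qc n) (M \ {s(u, v)}))
    (huv : (Qc n).Adj u v) (hu : ¬ coveredBy (M \ {s(u, v)}) u) :
    ExtendsHamCycle (Qc n) M := by
  obtain ⟨p, hp, hpM⟩ := hA _ hM u v (wt_ne_of_adj huv) hu
  have hcard : 3 ≤ Fintype.card (Fin n → Bool) := by
    rw [Fintype.card_fun, Fintype.card_bool, Fintype.card_fin]
    calc 3 ≤ 2 ^ 2 := by norm_num
      _ ≤ 2 ^ n := Nat.pow_le_pow_right two_pos hn
  refine ⟨v, .cons huv.symm p, hp.isHamiltonianCycle_cons huv.symm hcard, fun e he => ?_⟩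
  rw [Walk.edges_cons, List.mem_cons]
  by_cases heuv : e = s(u, v)
  · exact .inl (heuv.trans Sym2.eq_swap)
  · exact .inr (hpM e ⟨he, heuv⟩)

/-- For `n ≥ 2`, if Conjecture A holds for dimension `n` then every matching of `Q_n`
extends to a Hamilton cycle of `Q_n`. -/
theorem stmt13 (n : ℕ) (hn : 2 ≤ n) (hA : ConjA n) :
    ∀ M : Set (Sym2 (Fin n → Bool)), IsMatchingOn (Qc n) M →
      ExtendsHamCycle (Qc n) M := by
  intro M hM
  rcases M.eq_empty_or_nonempty with rfl | ⟨e, he⟩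
  · let u : Fin n → Bool := fun _ => false
    refine extendsHamCycle_of_adj (u := u) hn hA ?_ (qc_adj_flipCoord u ⟨0, by omega⟩) ?_ <;>
      simp [IsMatchingOn, coveredBy]
  · induction e using Sym2.ind with
    | _ u v =>
      exact extendsHamCycle_of_adj hn hA (hM.mono Set.sdiff_subset) (hM.1 he)
        (hM.not_coveredBy_diff he (Sym2.mem_mk_left u v))
end
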